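/- Let G be a group, P a submonoid of G, and for p ∈ P let L_p be the isometry of ℓ²(P) determined by L_p δ_q = δ_{pq}. Let α = (p₁, p₂, …, p_{2k}) be an even-length word of elements of P (k ≥ 1), set L_α := L_{p₁}(L_{p₂})† ⋯ L_{p_{2k-1}}(L_{p_{2k}})†, and let r ∈ P. If rP ∩ K(α) = ∅, then L_α ∘ L_r = 0 as an operator on ℓ²(P). -/
import Mathlib


/-- The iterated right quotient `\mathring{α} = p₁p₂⁻¹p₃p₄⁻¹⋯p_{2k-1}p_{2k}⁻¹` of the
even-length word `α = (p 1, p 2, …, p (2k))` (indices are `1`-based). -/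
def wordQuotient {G : Type*} [Group G] (p : ℕ → G) (k : ℕ) : G :=
  ((List.range k).map fun i => p (2 * i + 1) * (p (2 * i + 2))⁻¹).prod

/-- The element `g_j = p_{2k}p_{2k-1}⁻¹p_{2k-2}p_{2k-3}⁻¹⋯p_{2j+2}p_{2j+1}⁻¹p_{2j}`
(for `1 ≤ j ≤ k`), so that `g_k = p_{2k}`. -/
def wordG {G : Type*} [Group G] (p : ℕ → G) (k j : ℕ) : G :=
  ((List.range (k - j)).map fun i => p (2 * k - 2 * i) * (p (2 * k - 2 * i - 1))⁻¹).prod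
    * p (2 * j)

/-- The constructible right ideal `K(α) = ⋂_{j=1}^{k} g_j P` of the word
`α = (p 1, …, p (2k))`. -/
def wordK {G : Type*} [Group G] (P : Submonoid G) (p : ℕ → G) (k : ℕ) : Set G :=
  {x : G | ∀ j : ℕ, 1 ≤ j → j ≤ k → ∃ q ∈ P, x = wordG p k j * q}

/-- The operator `L_α = L_{p₁}(L_{p₂})† L_{p₃}(L_{p₄})† ⋯ L_{p_{2k-1}}(L_{p_{2k}})†` on
`ℓ²(P)` associated to the even-length word `α = (w 1, …, w (2k))` of elements of `P`. -/
noncomputable def wordOp {G : Type*} [Group G] (P : Submonoid G)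
    (L : P → (lp (fun _ : P => ℂ) 2 →L[ℂ] lp (fun _ : P => ℂ) 2)) (w : ℕ → P) (k : ℕ) :
    lp (fun _ : P => ℂ) 2 →L[ℂ] lp (fun _ : P => ℂ) 2 :=
  ((List.range k).map fun i =>
    L (w (2 * i + 1)) * ContinuousLinearMap.adjoint (L (w (2 * i + 2)))).prod


section Aux

variable {G : Type*} [Group G] [DecidableEq G] (P : Submonoid G)
variable (L : P → (lp (fun _ : P => ℂ) 2 →L[ℂ] lp (fun _ : P => ℂ) 2))
variable (hL : ∀ p q : P, L p (lp.single 2 q 1) = lp.single 2 (p * q) 1)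

local notation "δ" => fun s : P => lp.single (E := fun _ : P => ℂ) 2 s (1 : ℂ)

include hL in
lemma adj_apply (p : P) (f : lp (fun _ : P => ℂ) 2) (u : P) :
    (ContinuousLinearMap.adjoint (L p) f) u = f (p * u) := by
  have h1 : (ContinuousLinearMap.adjoint (L p) f) u
      = inner (𝕜 := ℂ) (δ u) (ContinuousLinearMap.adjoint (L p) f) := by
    rw [lp.inner_single_left]; simp
  rw [h1, ContinuousLinearMap.adjoint_inner_right, hL, lp.inner_single_left]; simp

include hL in
lemma adj_single_of_eq (p t : P) :
    ContinuousLinearMap.adjoint (L p) (δ (p * t)) = δ t := by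
  refine lp.ext (funext fun u => ?_)
  rw [adj_apply P L hL]
  by_cases h : u = t
  · subst h; simp [lp.single_apply]
  · rw [lp.single_apply_ne _ _ _ h, lp.single_apply_ne]
    intro hc
    exact h (Subtype.ext (mul_left_cancel (congrArg Subtype.val hc)))

include hL in
lemma adj_single_of_ne (p s : P) (h : ∀ t : P, s ≠ p * t) :
    ContinuousLinearMap.adjoint (L p) (δ s) = 0 := by
  refine lp.ext (funext fun u => ?_)
  rw [adj_apply P L hL, lp.single_apply_ne, lp.coeFn_zero, Pi.zero_apply]
  exact fun hc => h u hc.symm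

lemma wordG_last (p : ℕ → G) (n : ℕ) : wordG p n n = p (2 * n) := by
  simp [wordG]

lemma wordG_succ (p : ℕ → G) (n j : ℕ) (hj : j ≤ n) :
    wordG p (n + 1) j = p (2 * n + 2) * (p (2 * n + 1))⁻¹ * wordG p n j := by
  unfold wordG
  have h1 : n + 1 - j = (n - j) + 1 := by omega
  rw [h1, List.range_succ_eq_map, List.map_cons, List.prod_cons, List.map_map, mul_assoc]
  have e1 : 2 * (n + 1) - 2 * 0 = 2 * n + 2 := by omega
  have e2 : 2 * n + 2 - 1 = 2 * n + 1 := by omega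
  rw [e1, e2]
  congr 2
  refine congrArg List.prod (List.map_congr_left fun i _hi => ?_)
  simp only [Function.comp]
  have e3 : 2 * (n + 1) - 2 * (i + 1) = 2 * n - 2 * i := by omega
  have e4 : 2 * (n + 1) - 2 * (i + 1) - 1 = 2 * n - 2 * i - 1 := by omega
  rw [e3]

include hL in
lemma wordOp_single_ne_zero (w : ℕ → P) (k : ℕ) :
    ∀ s : P, wordOp P L w k (δ s) ≠ 0 →
      ∀ j : ℕ, 1 ≤ j → j ≤ k →
        ∃ q ∈ P, (s : G) = wordG (fun i => (w i : G)) k j * q := by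
  induction k with
  | zero => intro s _ j h1 h0; omega
  | succ n ih =>
    intro s hne j hj1 hjk
    have hsplit : wordOp P L w (n + 1) = wordOp P L w n *
        (L (w (2 * n + 1)) * ContinuousLinearMap.adjoint (L (w (2 * n + 2)))) := by
      unfold wordOp
      rw [List.range_succ, List.map_append, List.prod_append]
      simp
    by_cases hex : ∃ t : P, s = w (2 * n + 2) * t
    · obtain ⟨t, rfl⟩ := hex
      have happ : wordOp P L w (n + 1) (δ (w (2 * n + 2) * t))
          = wordOp P L w n (δ (w (2 * n + 1) * t)) := by
        rw [hsplit, ContinuousLinearMap.mul_apply, ContinuousLinearMap.mul_apply,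
          adj_single_of_eq P L hL, hL]
      rcases Nat.lt_or_ge j (n + 1) with hj | hj
      · have hne' : wordOp P L w n (δ (w (2 * n + 1) * t)) ≠ 0 := happ ▸ hne
        obtain ⟨q, hqP, hq⟩ := ih _ hne' j hj1 (by omega)
        refine ⟨q, hqP, ?_⟩
        rw [wordG_succ _ _ _ (by omega)]
        have : ((w (2 * n + 1) : G)) * t = wordG (fun i => (w i : G)) n j * q := by
          push_cast at hq ⊢; exact hq
        calc ((w (2 * n + 2) * t : P) : G)
            = (w (2 * n + 2) : G) * ((w (2 * n + 1) : G))⁻¹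
              * ((w (2 * n + 1) : G) * (t : G)) := by push_cast; group
          _ = _ := by rw [this]; simp [mul_assoc]
      · have hj' : j = n + 1 := by omega
        subst hj'
        refine ⟨(t : G), t.2, ?_⟩
        rw [wordG_last]
        have : 2 * (n + 1) = 2 * n + 2 := by ring
        rw [this]; push_cast; ring
    · exfalso
      apply hne
      rw [hsplit, ContinuousLinearMap.mul_apply, ContinuousLinearMap.mul_apply,
        adj_single_of_ne P L hL _ _ (fun t ht => hex ⟨t, ht⟩)]
      simp

end Aux

/-- Let `G` be a group, `P` a submonoid of `G`, and `L_p` the isometry of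
`ℓ²(P)` determined by `L_p δ_q = δ_{pq}`.  Let `α = (w 1, …, w (2k))` be an even-length word
of elements of `P` (`k ≥ 1`), `L_α = L_{w 1}(L_{w 2})† ⋯ L_{w (2k-1)}(L_{w (2k)})†`, and let
`r ∈ P`.  If `rP ∩ K(α) = ∅`, then `L_α ∘ L_r = 0` as an operator on `ℓ²(P)`. -/
theorem stmt_8 {G : Type*} [Group G] [DecidableEq G] (P : Submonoid G)
    (L : P → (lp (fun _ : P => ℂ) 2 →L[ℂ] lp (fun _ : P => ℂ) 2))
    (hL : ∀ p q : P, L p (lp.single 2 q 1) = lp.single 2 (p * q) 1)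
    (k : ℕ) (hk : 1 ≤ k) (w : ℕ → P) (r : P)
    (hdisj : {x : G | ∃ q ∈ P, x = (r : G) * q} ∩ wordK P (fun i => (w i : G)) k = ∅) :
    wordOp P L w k ∘L L r = 0 := by
  have key : ∀ q : P, wordOp P L w k (L r (lp.single 2 q 1)) = 0 := by
    intro q
    rw [hL]
    by_contra hne
    have hmem := wordOp_single_ne_zero P L hL w k (r * q) hne
    have hx : ((r * q : P) : G) ∈
        ({x : G | ∃ y ∈ P, x = (r : G) * y} ∩ wordK P (fun i => (w i : G)) k) := by
      refine ⟨⟨(q : G), q.2, by push_cast; ring⟩, fun j hj1 hjk => hmem j hj1 hjk⟩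
    rw [hdisj] at hx
    exact hx
  refine ContinuousLinearMap.ext fun x => ?_
  rw [ContinuousLinearMap.comp_apply, ContinuousLinearMap.zero_apply]
  have h1 : HasSum (fun q : P => lp.single 2 q (x q)) x :=
    lp.hasSum_single ENNReal.ofNat_ne_top x
  have h2 := ((wordOp P L w k).comp (L r)).hasSum h1
  have h3 : ∀ q : P, ((wordOp P L w k).comp (L r)) (lp.single 2 q (x q)) = 0 := by
    intro q
    have : lp.single (E := fun _ : P => ℂ) 2 q (x q) = x q • lp.single 2 q 1 := by
      rw [← lp.single_smul]; norm_num
    rw [this]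
    simp only [ContinuousLinearMap.coe_comp', Function.comp_apply, map_smul]
    rw [key q, smul_zero]
  simp only [h3] at h2
  have h4 := h2.unique hasSum_zero
  rw [ContinuousLinearMap.comp_apply] at h4
  exact h4
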